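/- Temporal policy gradient theorem (finite-horizon, finite case): for a finite MDP with episodes of fixed length T, positive differentiable policy π_θ, and trajectory distribution p_θ(τ) = p_init(s_0) ∏_{t=0}^{T−1} π_θ(a_t|s_t) p(s_{t+1}|s_t,a_t), the derivative of V^θ = E_{τ∼p_θ}[∑_{t=0}^{T} r(s_t)] equals E_{τ∼p_θ}[∑_{t=0}^{T−1} (d/dθ log π_θ(a_t|s_t)) ∑_{t'=t+1}^{T} r(s_{t'})]. -/

import Mathlib

/-- Probability of the trajectory `(s, a)` of horizon `T`:
`p_init(s_0) ∏_{t=0}^{T-1} π_θ(a_t|s_t) p(s_{t+1}|s_t,a_t)`. -/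
def trajProb {S A : Type} {T : ℕ} (pinit : S → ℝ) (p : S → A → S → ℝ)
    (πθ : S → A → ℝ) (s : Fin (T + 1) → S) (a : Fin T → A) : ℝ :=
  pinit (s 0) * ∏ t : Fin T, πθ (s t.castSucc) (a t) * p (s t.castSucc) (a t) (s t.succ)

/-! Differentiating each trajectory probability by the log-derivative trick gives the gradient
with the full return `∑_{t'} r(s_{t'})` in place of the reward-to-go. A reward collected at a time
`t' ≤ t` is a function of the history `s_0, …, s_t`; summing out the rest of the trajectory (total
mass one) and then the action `a_t` multiplies it by
`∑_a π_θ(a|s_t) ∂_θ log π_θ(a|s_t) = ∂_θ ∑_a π_θ(a|s_t) = 0`, so these terms drop out. -/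

open Finset

theorem Fin.sum_univ_fun_snoc {α β : Type*} [Fintype α] [AddCommMonoid β] {n : ℕ}
    (g : (Fin (n + 1) → α) → β) :
    ∑ f, g f = ∑ f : Fin n → α, ∑ x, g (Fin.snoc f x) := by
  rw [← Fintype.sum_prod_type' (f := fun f x => g (Fin.snoc f x)),
    ← Fintype.sum_equiv ((Equiv.prodComm _ _).trans (Fin.snocEquiv fun _ => α)) _ g fun _ => rfl]
  rfl

theorem Fin.sum_filter_not_castSucc_lt {M : Type*} [AddCommMonoid M] {T : ℕ} (t : Fin T)
    (f : Fin (T + 1) → M) :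
    ∑ t' ∈ univ.filter (fun t' => ¬ t.castSucc < t'), f t' =
      ∑ j : Fin (t + 1), f (Fin.castLE t.castSucc.isLt j) := by
  have hfilter : univ.filter (fun t' => ¬ t.castSucc < t') =
      univ.map (Fin.castLEEmb t.castSucc.isLt) := by
    ext t'
    simp only [mem_filter, mem_univ, true_and, mem_map, Fin.castLEEmb_apply, not_lt, Fin.le_def,
      Fin.val_castSucc, Fin.ext_iff, Fin.val_castLE]
    exact ⟨fun h => ⟨⟨t', by omega⟩, rfl⟩, fun ⟨j, hj⟩ => by omega⟩
  rw [hfilter, sum_map]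
  rfl

theorem hasDerivAt_finsetProd_of_ne_zero {ι : Type*} {u : Finset ι} {f : ι → ℝ → ℝ} {x : ℝ}
    (hf : ∀ i ∈ u, DifferentiableAt ℝ (f i) x) (hne : ∀ i ∈ u, f i x ≠ 0) :
    HasDerivAt (fun θ => ∏ i ∈ u, f i θ)
      ((∏ i ∈ u, f i x) * ∑ i ∈ u, deriv (fun θ => Real.log (f i θ)) x) x := by
  refine (DifferentiableAt.fun_finsetProd hf).hasDerivAt.congr_deriv ?_
  have hlog : ∀ i ∈ u, deriv (fun θ => Real.log (f i θ)) x = logDeriv (f i) x :=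
    fun i hi => ((hf i hi).hasDerivAt.log (hne i hi)).deriv
  rw [sum_congr rfl hlog, ← logDeriv_prod hne hf, logDeriv_apply,
    mul_div_cancel₀ _ (prod_ne_zero_iff.mpr hne)]

theorem sum_mul_deriv_log_eq_zero {A : Type*} [Fintype A] {q : ℝ → A → ℝ} {x : ℝ}
    (hdiff : ∀ a, DifferentiableAt ℝ (q · a) x) (hne : ∀ a, q x a ≠ 0)
    (hsum : ∀ θ, ∑ a, q θ a = 1) :
    ∑ a, q x a * deriv (fun θ => Real.log (q θ a)) x = 0 := by
  have hterm : ∀ a, q x a * deriv (fun θ => Real.log (q θ a)) x = deriv (q · a) x := fun a => by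
    rw [((hdiff a).hasDerivAt.log (hne a)).deriv, mul_div_cancel₀ _ (hne a)]
  rw [sum_congr rfl fun a _ => hterm a, ← deriv_fun_sum fun a _ => hdiff a]
  simp only [hsum, deriv_const]

section Trajectory

variable {S A : Type} (c : S → ℝ) (p : S → A → S → ℝ) (πθ : S → A → ℝ)

theorem trajProb_snoc {T : ℕ} (s : Fin (T + 1) → S) (x : S) (a : Fin T → A) (b : A) :
    trajProb c p πθ (Fin.snoc s x : Fin (T + 2) → S) (Fin.snoc a b) =
      trajProb c p πθ s a * (πθ (s (Fin.last T)) b * p (s (Fin.last T)) b x) := by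
  simp only [trajProb, Fin.prod_univ_castSucc, Fin.snoc_castSucc, Fin.succ_castSucc,
    Fin.snoc_last, Fin.succ_last, mul_assoc]
  rfl

theorem hasDerivAt_trajProb {π : ℝ → S → A → ℝ} {θ₀ : ℝ}
    (hdiff : ∀ s a, DifferentiableAt ℝ (fun θ => π θ s a) θ₀) (hne : ∀ s a, π θ₀ s a ≠ 0)
    {T : ℕ} (s : Fin (T + 1) → S) (a : Fin T → A) :
    HasDerivAt (fun θ => trajProb c p (π θ) s a)
      (trajProb c p (π θ₀) s a *
        ∑ t, deriv (fun θ => Real.log (π θ (s t.castSucc) (a t))) θ₀) θ₀ := by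
  have hsplit : ∀ θ, trajProb c p (π θ) s a =
      (c (s 0) * ∏ t : Fin T, p (s t.castSucc) (a t) (s t.succ)) *
        ∏ t : Fin T, π θ (s t.castSucc) (a t) := fun θ => by
    simp only [trajProb, prod_mul_distrib]
    ring
  simp only [hsplit]
  exact ((hasDerivAt_finsetProd_of_ne_zero (fun t _ => hdiff (s t.castSucc) (a t))
    fun t _ => hne (s t.castSucc) (a t)).const_mul _).congr_deriv (mul_assoc _ _ _).symm

variable [Fintype S] [Fintype A]

theorem sum_trajProb_mul_succ {T : ℕ} (F : (Fin (T + 2) → S) → (Fin (T + 1) → A) → ℝ) :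
    ∑ s, ∑ a, trajProb c p πθ s a * F s a =
      ∑ s, ∑ a, trajProb c p πθ s a * ∑ b, πθ (s (Fin.last T)) b *
        ∑ x, p (s (Fin.last T)) b x * F (Fin.snoc s x) (Fin.snoc a b) := by
  rw [Fin.sum_univ_fun_snoc]
  refine sum_congr rfl fun s _ => ?_
  simp only [Fin.sum_univ_fun_snoc (n := T), trajProb_snoc, mul_sum, mul_assoc]
  rw [sum_comm]
  refine sum_congr rfl fun a _ => ?_
  rw [sum_comm]

variable {c p πθ}

theorem sum_trajProb_mul_init (hπ : ∀ s, ∑ a, πθ s a = 1) (hp : ∀ s a, ∑ x, p s a x = 1)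
    {T : ℕ} (f : (Fin (T + 1) → S) → (Fin T → A) → ℝ) :
    ∑ s : Fin (T + 2) → S, ∑ a, trajProb c p πθ s a * f (Fin.init s) (Fin.init a) =
      ∑ s, ∑ a, trajProb c p πθ s a * f s a := by
  simp only [sum_trajProb_mul_succ, Fin.init_snoc, ← sum_mul, hp, one_mul, hπ]

theorem sum_trajProb_mul_take (hπ : ∀ s, ∑ a, πθ s a = 1) (hp : ∀ s a, ∑ x, p s a x = 1)
    {k T : ℕ} (hk : k ≤ T) (f : (Fin (k + 1) → S) → (Fin k → A) → ℝ) :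
    ∑ s : Fin (T + 1) → S, ∑ a : Fin T → A,
        trajProb c p πθ s a * f (Fin.take (k + 1) (Nat.succ_le_succ hk) s) (Fin.take k hk a) =
      ∑ s, ∑ a, trajProb c p πθ s a * f s a := by
  induction T, hk using Nat.le_induction with
  | base => simp only [Fin.take_eq_self]
  | succ T hk ih =>
    exact (sum_trajProb_mul_init hπ hp
      fun s a => f (Fin.take (k + 1) (Nat.succ_le_succ hk) s) (Fin.take k hk a)).trans ih

theorem sum_trajProb_mul_score_last_eq_zero {L : S → A → ℝ} (hp : ∀ s a, ∑ x, p s a x = 1)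
    (hL : ∀ s, ∑ a, πθ s a * L s a = 0) {T : ℕ} (g : (Fin (T + 1) → S) → ℝ) :
    ∑ s : Fin (T + 2) → S, ∑ a : Fin (T + 1) → A,
      trajProb c p πθ s a * (L (s (Fin.last T).castSucc) (a (Fin.last T)) * g (Fin.init s)) = 0 := by
  rw [sum_trajProb_mul_succ]
  refine sum_eq_zero fun s _ => sum_eq_zero fun a _ => ?_
  simp only [Fin.snoc_castSucc, Fin.snoc_last, Fin.init_snoc, ← sum_mul, hp, one_mul, ← mul_assoc,
    hL, zero_mul, mul_zero]

theorem sum_trajProb_mul_score_eq_zero {L : S → A → ℝ} (hπ : ∀ s, ∑ a, πθ s a = 1)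
    (hp : ∀ s a, ∑ x, p s a x = 1) (hL : ∀ s, ∑ a, πθ s a * L s a = 0) {T : ℕ} (t : Fin T)
    (g : (Fin (t + 1) → S) → ℝ) :
    ∑ s : Fin (T + 1) → S, ∑ a : Fin T → A,
      trajProb c p πθ s a * (L (s t.castSucc) (a t) * g (Fin.take (t + 1) t.castSucc.isLt s)) =
        0 :=
  (sum_trajProb_mul_take hπ hp t.isLt fun s a =>
    L (s (Fin.last t).castSucc) (a (Fin.last t)) * g (Fin.init s)).trans
      (sum_trajProb_mul_score_last_eq_zero hp hL g)

end Trajectory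

theorem stmt15_general {S A : Type} [Fintype S] [Fintype A]
    (T : ℕ) (pinit : S → ℝ) (p : S → A → S → ℝ) (π : ℝ → S → A → ℝ)
    (r : S → ℝ) (θ₀ : ℝ)
    (hπpos : ∀ θ s a, 0 < π θ s a)
    (hπdiff : ∀ s a, Differentiable ℝ (fun θ => π θ s a))
    (hπsum : ∀ θ s, ∑ a : A, π θ s a = 1)
    (hp1 : ∀ s a, ∑ s' : S, p s a s' = 1) :
    HasDerivAt
      (fun θ => ∑ s : Fin (T + 1) → S, ∑ a : Fin T → A,
        trajProb pinit p (π θ) s a * ∑ t : Fin (T + 1), r (s t))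
      (∑ s : Fin (T + 1) → S, ∑ a : Fin T → A,
        trajProb pinit p (π θ₀) s a *
          ∑ t : Fin T, deriv (fun u => Real.log (π u (s t.castSucc) (a t))) θ₀ *
            ∑ t' ∈ Finset.univ.filter (fun t' : Fin (T + 1) => t.castSucc < t'),
              r (s t'))
      θ₀ := by
  have hdiff : ∀ s a, DifferentiableAt ℝ (fun θ => π θ s a) θ₀ := fun s a => hπdiff s a θ₀
  have hne : ∀ s a, π θ₀ s a ≠ 0 := fun s a => (hπpos θ₀ s a).ne'
  have hscore : ∀ x, ∑ b, π θ₀ x b * deriv (fun u => Real.log (π u x b)) θ₀ = 0 := fun x =>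
    sum_mul_deriv_log_eq_zero (hdiff x) (hne x) fun θ => hπsum θ x
  have hreward : ∀ (P : ℝ) (L : Fin T → ℝ) (R : Fin (T + 1) → ℝ),
      (P * ∑ t, L t) * ∑ t', R t' =
        ∑ t, P * (L t * ∑ t' ∈ univ.filter (fun t' => t.castSucc < t'), R t') +
          ∑ t, P * (L t * ∑ t' ∈ univ.filter (fun t' => ¬ t.castSucc < t'), R t') := by
    intro P L R
    rw [mul_assoc, sum_mul, mul_sum, ← sum_add_distrib]
    refine sum_congr rfl fun t _ => ?_
    rw [← mul_add, ← mul_add, sum_filter_add_sum_filter_not]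
  have hbaseline : ∑ s : Fin (T + 1) → S, ∑ a : Fin T → A, ∑ t,
      trajProb pinit p (π θ₀) s a * (deriv (fun u => Real.log (π u (s t.castSucc) (a t))) θ₀ *
        ∑ t' ∈ univ.filter (fun t' => ¬ t.castSucc < t'), r (s t')) = 0 := by
    rw [(sum_congr rfl fun s _ => sum_comm).trans sum_comm]
    refine sum_eq_zero fun t _ => ?_
    simpa only [Fin.sum_filter_not_castSucc_lt, Fin.take_apply] using
      sum_trajProb_mul_score_eq_zero (hπsum θ₀) hp1 hscore t fun s' => ∑ j, r (s' j)
  refine (HasDerivAt.fun_sum fun s _ => HasDerivAt.fun_sum fun a _ =>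
    (hasDerivAt_trajProb pinit p hdiff hne s a).mul_const _).congr_deriv ?_
  simp only [hreward, sum_add_distrib, hbaseline, add_zero]
  simp only [mul_sum]

/-- Temporal policy gradient theorem (finite-horizon, finite case): for a
finite MDP with episodes of fixed length `T`, positive differentiable policy
`π_θ` and trajectory distribution `p_θ`, the derivative of
`V^θ = E_{τ∼p_θ}[∑_{t=0}^{T} r(s_t)]` equals
`E_{τ∼p_θ}[∑_{t=0}^{T−1} (d/dθ log π_θ(a_t|s_t)) ∑_{t'=t+1}^{T} r(s_{t'})]`. -/
theorem stmt15 {S A : Type} [Fintype S] [Fintype A] [DecidableEq S] [DecidableEq A]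
    (T : ℕ) (pinit : S → ℝ) (p : S → A → S → ℝ) (π : ℝ → S → A → ℝ)
    (r : S → ℝ) (θ₀ : ℝ)
    (hπpos : ∀ θ s a, 0 < π θ s a)
    (hπdiff : ∀ s a, Differentiable ℝ (fun θ => π θ s a))
    (hπsum : ∀ θ s, ∑ a : A, π θ s a = 1)
    (hpinit0 : ∀ s, 0 ≤ pinit s) (hpinit1 : ∑ s : S, pinit s = 1)
    (hp0 : ∀ s a s', 0 ≤ p s a s') (hp1 : ∀ s a, ∑ s' : S, p s a s' = 1) :
    HasDerivAt
      (fun θ => ∑ s : Fin (T + 1) → S, ∑ a : Fin T → A,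
        trajProb pinit p (π θ) s a * ∑ t : Fin (T + 1), r (s t))
      (∑ s : Fin (T + 1) → S, ∑ a : Fin T → A,
        trajProb pinit p (π θ₀) s a *
          ∑ t : Fin T, deriv (fun u => Real.log (π u (s t.castSucc) (a t))) θ₀ *
            ∑ t' ∈ Finset.univ.filter (fun t' : Fin (T + 1) => t.castSucc < t'),
              r (s t'))
      θ₀ :=
  stmt15_general T pinit p π r θ₀ hπpos hπdiff hπsum hp1
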